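/- arXiv:2112.10179 — 4 statements merged into one kernel-verified Lean document; each statement's English description precedes it below -/
import Mathlib

section
/- Let t ≥ 0 be a real number and N ≥ 1 a natural number. In the real Hilbert space ℓ²(ℕ), define the unit vector ψ with coordinates ψ_k = e^{−t²/2} · t^k / √(k!) for all k ∈ ℕ, and the truncated unit vector ψ_N with coordinates (ψ_N)_k = B^{−1/2} · t^k / √(k!) for k < N and (ψ_N)_k = 0 for k ≥ N, where B = ∑_{k=0}^{N−1} t^{2k} / k!. Then ‖ψ − ψ_N‖² ≤ 2 t^{2N} / N!. -/
/-!
Both vectors are unit vectors and `⟪ψ, ψ_N⟫ = e^{-t²/2} √B ∈ [0, 1]`, so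
`‖ψ - ψ_N‖² = 2 - 2 ⟪ψ, ψ_N⟫ ≤ 2 (1 - ⟪ψ, ψ_N⟫²) = 2 (1 - e^{-t²} B)`. The last factor is the
Poisson tail `∑_{k ≥ N} e^{-t²} t^{2k} / k!`, which is at most `t^{2N} / N!` because
`N! i! ≤ (N + i)!`.
-/

open Real Finset Nat

namespace Real

lemma hasSum_pow_div_factorial (x : ℝ) : HasSum (fun k ↦ x ^ k / k !) (exp x) :=
  exp_eq_exp_ℝ ▸ NormedSpace.expSeries_div_hasSum_exp x

lemma exp_sub_sum_range_pow_div_factorial_le {x : ℝ} (hx : 0 ≤ x) (N : ℕ) :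
    exp x - ∑ k ∈ range N, x ^ k / k ! ≤ x ^ N / N ! * exp x := by
  have hs := hasSum_pow_div_factorial x
  have htail : ∀ i, x ^ (i + N) / (i + N) ! ≤ x ^ N / N ! * (x ^ i / i !) := by
    intro i
    have hfac : (N ! * i ! : ℝ) ≤ (i + N) ! := by
      exact_mod_cast Nat.le_of_dvd (factorial_pos _)
        (add_comm N i ▸ factorial_mul_factorial_dvd_factorial_add N i)
    calc x ^ (i + N) / (i + N) ! ≤ x ^ (i + N) / (N ! * i !) := by gcongr
      _ = x ^ N / N ! * (x ^ i / i !) := by rw [pow_add]; field_simp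
  calc exp x - ∑ k ∈ range N, x ^ k / k ! = ∑' i, x ^ (i + N) / (i + N) ! := by
        rw [← hs.tsum_eq, ← hs.summable.sum_add_tsum_nat_add N, add_sub_cancel_left]
    _ ≤ ∑' i, x ^ N / N ! * (x ^ i / i !) :=
        ((summable_nat_add_iff N).2 hs.summable).tsum_le_tsum htail (hs.summable.mul_left _)
    _ = x ^ N / N ! * exp x := by rw [tsum_mul_left, hs.tsum_eq]

lemma one_sub_exp_neg_mul_sum_range_pow_div_factorial_le {x : ℝ} (hx : 0 ≤ x) (N : ℕ) :
    1 - exp (-x) * ∑ k ∈ range N, x ^ k / k ! ≤ x ^ N / N ! := by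
  have h := mul_le_mul_of_nonneg_left (exp_sub_sum_range_pow_div_factorial_le hx N)
    (exp_pos (-x)).le
  rwa [mul_sub, mul_left_comm, ← exp_add, neg_add_cancel, exp_zero, mul_one] at h

end Real

lemma norm_sub_sq_le_two_mul_one_sub_inner_sq {E : Type*} [NormedAddCommGroup E]
    [InnerProductSpace ℝ E] {u v : E} (hu : ‖u‖ = 1) (hv : ‖v‖ = 1) (huv : 0 ≤ inner ℝ u v) :
    ‖u - v‖ ^ 2 ≤ 2 * (1 - inner ℝ u v ^ 2) := by
  have h1 : inner ℝ u v ≤ 1 := by simpa [hu, hv] using real_inner_le_norm u v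
  rw [norm_sub_sq_real, hu, hv]
  nlinarith

namespace lp

variable {ι : Type*}

lemma real_inner_eq_tsum (u v : lp (fun _ : ι ↦ ℝ) 2) : inner ℝ u v = ∑' i, u i * v i := by
  simp only [inner_eq_tsum, mul_comm (u _)]
  rfl

lemma real_inner_eq_sum_of_support_subset (u v : lp (fun _ : ι ↦ ℝ) 2) {s : Finset ι}
    (hv : ∀ i ∉ s, v i = 0) : inner ℝ u v = ∑ i ∈ s, u i * v i := by
  rw [real_inner_eq_tsum, tsum_eq_sum fun i hi ↦ by rw [hv i hi, mul_zero]]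

end lp

lemma mul_pow_div_sqrt_factorial_mul (c d t : ℝ) (k : ℕ) :
    c * t ^ k / √(k ! : ℝ) * (d * t ^ k / √(k ! : ℝ)) = c * d * ((t ^ 2) ^ k / k !) := by
  have hk : 0 < (k ! : ℝ) := by positivity
  rw [← pow_mul, mul_comm 2, pow_mul]
  field_simp
  rw [Real.sq_sqrt hk.le]
  ring

theorem coherent_state_truncation_general (t : ℝ) (N : ℕ) (hN : 1 ≤ N)
    (ψ ψN : lp (fun _ : ℕ => ℝ) 2)
    (hψ : ∀ k : ℕ, ψ k = Real.exp (-(t ^ 2) / 2) * t ^ k / Real.sqrt (Nat.factorial k))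
    (hψN : ∀ k : ℕ, ψN k =
      if k < N then
        (Real.sqrt (∑ j ∈ Finset.range N, t ^ (2 * j) / (Nat.factorial j)))⁻¹ *
          t ^ k / Real.sqrt (Nat.factorial k)
      else 0) :
    ‖ψ - ψN‖ ^ 2 ≤ 2 * t ^ (2 * N) / Nat.factorial N := by
  simp only [pow_mul] at hψN ⊢
  set B := ∑ j ∈ range N, (t ^ 2) ^ j / (j ! : ℝ)
  set c := exp (-(t ^ 2) / 2)
  have hB : 0 < B := sum_pos' (fun k _ ↦ by positivity) ⟨0, mem_range.2 hN, by simp⟩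
  have hc : c * c = exp (-t ^ 2) := by rw [← exp_add]; ring_nf
  have hψN_supp : ∀ k ∉ range N, ψN k = 0 := fun k hk ↦ by
    rw [hψN, if_neg (mt mem_range.2 hk)]
  have hψN_coord : ∀ k ∈ range N, ψN k = (√B)⁻¹ * t ^ k / √(k ! : ℝ) := fun k hk ↦ by
    rw [hψN, if_pos (mem_range.1 hk)]
  have hψ1 : ‖ψ‖ = 1 := by
    rw [← pow_eq_one_iff_of_nonneg (norm_nonneg ψ) two_ne_zero, ← real_inner_self_eq_norm_sq,
      lp.real_inner_eq_tsum]
    simp only [hψ, mul_pow_div_sqrt_factorial_mul]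
    rw [((hasSum_pow_div_factorial _).mul_left _).tsum_eq, hc, ← exp_add, neg_add_cancel, exp_zero]
  have hψN1 : ‖ψN‖ = 1 := by
    rw [← pow_eq_one_iff_of_nonneg (norm_nonneg ψN) two_ne_zero, ← real_inner_self_eq_norm_sq,
      lp.real_inner_eq_sum_of_support_subset _ _ hψN_supp, sum_congr rfl fun k hk ↦ by
        rw [hψN_coord k hk, mul_pow_div_sqrt_factorial_mul], ← mul_sum, ← mul_inv,
      Real.mul_self_sqrt hB.le, inv_mul_cancel₀ hB.ne']
  have hinner : inner ℝ ψ ψN = c * √B := by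
    rw [lp.real_inner_eq_sum_of_support_subset _ _ hψN_supp, sum_congr rfl fun k hk ↦ by
        rw [hψ, hψN_coord k hk, mul_pow_div_sqrt_factorial_mul], ← mul_sum, mul_assoc,
      inv_mul_eq_div, Real.div_sqrt]
  calc ‖ψ - ψN‖ ^ 2 ≤ 2 * (1 - inner ℝ ψ ψN ^ 2) :=
        norm_sub_sq_le_two_mul_one_sub_inner_sq hψ1 hψN1 (hinner ▸ by positivity)
    _ = 2 * (1 - exp (-t ^ 2) * B) := by rw [hinner, mul_pow, sq, hc, Real.sq_sqrt hB.le]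
    _ ≤ 2 * ((t ^ 2) ^ N / N !) := by
        gcongr; exact one_sub_exp_neg_mul_sum_range_pow_div_factorial_le (sq_nonneg t) N
    _ = 2 * (t ^ 2) ^ N / N ! := by ring

/-- **Truncation error of the coherent state** (Eq. (10)): for `t ≥ 0` and `N ≥ 1`,
if `ψ ∈ ℓ²(ℕ)` is the coherent state with coordinates `ψ_k = e^{−t²/2} t^k / √(k!)`
and `ψ_N ∈ ℓ²(ℕ)` is its normalized truncation to the first `N` coordinates,
with normalization factor `B = ∑_{k<N} t^{2k}/k!`, then `‖ψ − ψ_N‖² ≤ 2 t^{2N}/N!`. -/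
theorem coherent_state_truncation (t : ℝ) (ht : 0 ≤ t) (N : ℕ) (hN : 1 ≤ N)
    (ψ ψN : lp (fun _ : ℕ => ℝ) 2)
    (hψ : ∀ k : ℕ, ψ k = Real.exp (-(t ^ 2) / 2) * t ^ k / Real.sqrt (Nat.factorial k))
    (hψN : ∀ k : ℕ, ψN k =
      if k < N then
        (Real.sqrt (∑ j ∈ Finset.range N, t ^ (2 * j) / (Nat.factorial j)))⁻¹ *
          t ^ k / Real.sqrt (Nat.factorial k)
      else 0) :
    ‖ψ - ψN‖ ^ 2 ≤ 2 * t ^ (2 * N) / Nat.factorial N :=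
  coherent_state_truncation_general t N hN ψ ψN hψ hψN
end

section
/- Let x⁽¹⁾,…,x⁽ᵐ⁾ ∈ ℝ^d be pairwise distinct points and σ > 0, and let K be the m×m real matrix with entries K_{ij} = e^{−‖x⁽ⁱ⁾ − x⁽ʲ⁾‖²/(2σ²)}. Then K is positive definite (in particular invertible). -/
/-!
The Gaussian is, up to a positive constant, its own convolution square:
`∫ e^{-b‖t-a‖²} e^{-b‖t-a'‖²} dt = C e^{-(b/2)‖a-a'‖²}`. With `b = σ⁻²` the matrix `K` is
therefore `C⁻¹` times the Gram matrix in `L²(ℝ^d)` of the translates `φᵢ t = e^{-b‖t-xᵢ‖²}`,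
so `cᵀ K c = C⁻¹ ∫ (∑ cᵢ φᵢ)²`, which vanishes only if `∑ cᵢ φᵢ ≡ 0`. Dividing by
`e^{-b‖t‖²}` turns the `φᵢ` into nonzero multiples of the exponentials `t ↦ e^{⟪2b xᵢ, t⟫}`;
these are distinct characters of `(ℝ^d, +)`, hence linearly independent by Dedekind's lemma,
so `c = 0`.
-/

open MeasureTheory Real
open scoped RealInnerProductSpace

open Matrix in
theorem Matrix.posDef_integral_mul_of_linearIndependent {X ι : Type*} [TopologicalSpace X]
    [MeasurableSpace X] {μ : Measure X} [μ.IsOpenPosMeasure] [Fintype ι] {φ : ι → X → ℝ}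
    (hφ : ∀ i, Continuous (φ i)) (hφφ : ∀ i j, Integrable (fun t => φ i t * φ j t) μ)
    (hli : LinearIndependent ℝ φ) :
    (Matrix.of fun i j => ∫ t, φ i t * φ j t ∂μ).PosDef := by
  refine Matrix.PosDef.of_dotProduct_mulVec_pos ?_ fun c hc => ?_
  · ext i j
    simp [mul_comm]
  set g : X → ℝ := fun t => ∑ i, c i * φ i t
  have hsq (t : X) : g t ^ 2 = ∑ i, ∑ j, c i * c j * (φ i t * φ j t) := by
    simp only [g, sq, Finset.sum_mul_sum]
    exact Finset.sum_congr rfl fun i _ => Finset.sum_congr rfl fun j _ => by ring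
  have hint (i j : ι) : Integrable (fun t => c i * c j * (φ i t * φ j t)) μ :=
    (hφφ i j).const_mul _
  have hquad :
      star c ⬝ᵥ (Matrix.of (fun i j => ∫ t, φ i t * φ j t ∂μ) *ᵥ c) = ∫ t, g t ^ 2 ∂μ := by
    simp_rw [hsq]
    rw [integral_finsetSum _ fun i _ => integrable_finsetSum _ fun j _ => hint i j]
    simp_rw [integral_finsetSum _ fun j _ => hint _ j, integral_const_mul]
    simp only [dotProduct, mulVec, of_apply, star_trivial, Finset.mul_sum]
    exact Finset.sum_congr rfl fun i _ => Finset.sum_congr rfl fun j _ => by ring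
  obtain ⟨t₀, ht₀⟩ : ∃ t, g t ≠ 0 := by
    by_contra! hg
    exact hc (funext (Fintype.linearIndependent_iff.mp hli c
      (funext fun t => by simpa [g] using hg t)))
  have hg_cont : Continuous g := continuous_finsetSum _ fun i _ => continuous_const.mul (hφ i)
  have hgsq_int : Integrable (fun t => g t ^ 2) μ := by
    simp_rw [hsq]
    exact integrable_finsetSum _ fun i _ => integrable_finsetSum _ fun j _ => hint i j
  rw [hquad]
  exact integral_pos_of_integrable_nonneg_nonzero (hg_cont.pow 2) hgsq_int
    (fun t => sq_nonneg (g t)) (pow_ne_zero 2 ht₀)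

section Gaussian

variable {V : Type*} [NormedAddCommGroup V] [InnerProductSpace ℝ V]

lemma linearIndependent_exp_inner {ι : Type*} {a : ι → V} (ha : Function.Injective a) :
    LinearIndependent ℝ (fun i (t : V) => exp ⟪a i, t⟫) := by
  let χ (a : V) : Multiplicative V →* ℝ :=
    { toFun t := exp ⟪a, t.toAdd⟫
      map_one' := by simp
      map_mul' s t := by simp only [toAdd_mul, inner_add_right, exp_add] }
  have hχ : Function.Injective χ := fun a a' h => by
    have hinner : ⟪a, a - a'⟫ = ⟪a', a - a'⟫ :=
      exp_injective (DFunLike.congr_fun h (Multiplicative.ofAdd (a - a')))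
    rw [← sub_eq_zero, ← inner_self_eq_zero (𝕜 := ℝ), inner_sub_left, hinner, sub_self]
  exact (linearIndependent_monoidHom (Multiplicative V) ℝ).comp _ (hχ.comp ha)

lemma linearIndependent_exp_neg_mul_sq_norm_sub {ι : Type*} {b : ℝ} (hb : b ≠ 0) {x : ι → V}
    (hx : Function.Injective x) :
    LinearIndependent ℝ (fun i (t : V) => exp (-b * ‖t - x i‖ ^ 2)) := by
  have hchar := linearIndependent_exp_inner (a := fun i => (2 * b) • x i)
    fun i j hij => hx (smul_right_injective V (by simpa using hb) hij)
  let w (i : ι) : ℝˣ := Units.mk0 (exp (-b * ‖x i‖ ^ 2)) (exp_ne_zero _)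
  let e : (V → ℝ) ≃ₗ[ℝ] (V → ℝ) := LinearEquiv.piCongrRight fun t =>
    LinearEquiv.smulOfNeZero ℝ ℝ (exp (-b * ‖t‖ ^ 2)) (exp_ne_zero _)
  have hfactor : (fun i (t : V) => exp (-b * ‖t - x i‖ ^ 2)) =
      e ∘ (w • fun i (t : V) => exp ⟪(2 * b) • x i, t⟫) := by
    funext i t
    simp only [w, e, Function.comp_apply, LinearEquiv.piCongrRight_apply,
      LinearEquiv.smulOfNeZero_apply, Pi.smul_apply', Units.smul_def, Units.val_mk0,
      Pi.smul_apply, smul_eq_mul, ← exp_add]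
    congr 1
    rw [norm_sub_sq_real, real_inner_smul_left, real_inner_comm]
    ring
  rw [hfactor]
  exact (hchar.units_smul w).map' e.toLinearMap e.ker

lemma exp_neg_mul_sq_norm_sub_mul_exp (b : ℝ) (a a' t : V) :
    exp (-b * ‖t - a‖ ^ 2) * exp (-b * ‖t - a'‖ ^ 2) =
      exp (-(b / 2) * ‖a - a'‖ ^ 2) * exp (-(2 * b) * ‖t - (2 : ℝ)⁻¹ • (a + a')‖ ^ 2) := by
  rw [← exp_add, ← exp_add]
  congr 1
  have hpar := parallelogram_law_with_norm ℝ (t - a) (t - a')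
  rw [show t - a + (t - a') = (2 : ℝ) • (t - (2 : ℝ)⁻¹ • (a + a')) by module,
    show t - a - (t - a') = a' - a by abel, norm_smul, norm_sub_rev a' a, Real.norm_two] at hpar
  linear_combination (b / 2) * hpar

variable [FiniteDimensional ℝ V] [MeasurableSpace V] [BorelSpace V]

lemma integrable_exp_neg_mul_sq_norm_sub {b : ℝ} (hb : 0 < b) (a : V) :
    Integrable fun t : V => exp (-b * ‖t - a‖ ^ 2) := by
  have hcexp := (GaussianFourier.integrable_cexp_neg_mul_sq_norm_add
    (V := V) (b := (b : ℂ)) (by simpa using hb) 0 0).norm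
  have hcentered : Integrable fun t : V => exp (-b * ‖t‖ ^ 2) :=
    hcexp.congr (Filter.Eventually.of_forall fun t => by
      simp [Complex.norm_exp, ← Complex.ofReal_pow])
  exact hcentered.comp_sub_right a

lemma integrable_exp_neg_mul_sq_norm_sub_mul_exp {b : ℝ} (hb : 0 < b) (a a' : V) :
    Integrable fun t : V => exp (-b * ‖t - a‖ ^ 2) * exp (-b * ‖t - a'‖ ^ 2) := by
  simp_rw [exp_neg_mul_sq_norm_sub_mul_exp b a a']
  exact (integrable_exp_neg_mul_sq_norm_sub (by positivity) _).const_mul _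

lemma integral_exp_neg_mul_sq_norm_sub_mul_exp {b : ℝ} (hb : 0 < b) (a a' : V) :
    ∫ t : V, exp (-b * ‖t - a‖ ^ 2) * exp (-b * ‖t - a'‖ ^ 2) =
      (π / (2 * b)) ^ (Module.finrank ℝ V / 2 : ℝ) * exp (-(b / 2) * ‖a - a'‖ ^ 2) := by
  simp_rw [exp_neg_mul_sq_norm_sub_mul_exp b a a']
  rw [integral_const_mul, integral_sub_right_eq_self (fun t => exp (-(2 * b) * ‖t‖ ^ 2)),
    GaussianFourier.integral_rexp_neg_mul_sq_norm (by positivity), mul_comm]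

end Gaussian

/-- **The Gaussian interpolation matrix is positive definite**: for pairwise distinct
points `x_1, …, x_m ∈ ℝ^d` and `σ > 0`, the matrix `K_{ij} = e^{−‖x_i − x_j‖²/(2σ²)}`
is positive definite (in particular invertible). -/
theorem gaussian_kernel_matrix_posDef {m d : ℕ}
    (x : Fin m → EuclideanSpace ℝ (Fin d)) (hx : Function.Injective x)
    (σ : ℝ) (hσ : 0 < σ) :
    (Matrix.of fun i j : Fin m =>
      Real.exp (-‖x i - x j‖ ^ 2 / (2 * σ ^ 2))).PosDef := by
  set b : ℝ := (σ ^ 2)⁻¹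
  have hb : 0 < b := by positivity
  set C : ℝ := (π / (2 * b)) ^ (Module.finrank ℝ (EuclideanSpace ℝ (Fin d)) / 2 : ℝ)
  have hC : 0 < C := by positivity
  have hK : (Matrix.of fun i j : Fin m => exp (-‖x i - x j‖ ^ 2 / (2 * σ ^ 2))) =
      C⁻¹ • Matrix.of fun i j =>
        ∫ t, exp (-b * ‖t - x i‖ ^ 2) * exp (-b * ‖t - x j‖ ^ 2) := by
    ext i j
    rw [Matrix.smul_apply, Matrix.of_apply, Matrix.of_apply,
      integral_exp_neg_mul_sq_norm_sub_mul_exp hb, smul_eq_mul, inv_mul_cancel_left₀ hC.ne']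
    congr 1
    simp only [b]
    field_simp
  rw [hK]
  exact (Matrix.posDef_integral_mul_of_linearIndependent (fun i => by fun_prop)
    (fun i j => integrable_exp_neg_mul_sq_norm_sub_mul_exp hb (x i) (x j))
    (linearIndependent_exp_neg_mul_sq_norm_sub hb.ne' hx)).smul (inv_pos.mpr hC)
end

section
/- Let A and E be real m×m matrices with A invertible, suppose γ := ‖A⁻¹E‖ < 1 (so that A + E is invertible), and let y ∈ ℝ^m be nonzero. Let c* = A⁻¹y and c = (A+E)⁻¹y (both nonzero). Then the normalized solutions satisfy ‖ c*/‖c*‖ − c/‖c‖ ‖ ≤ 2‖E‖·‖A⁻¹‖²·‖A‖ / (1 − γ). -/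
/-!
`A + E = A(1 + A⁻¹E)` is invertible by the Neumann series, and `(A + E)c = y` gives
`c* - c = A⁻¹(A + E)c - c = A⁻¹E c`, hence `‖c* - c‖ ≤ γ‖c‖`. Normalization satisfies
`‖u/‖u‖ - v/‖v‖‖ ≤ 2‖u - v‖/‖v‖`, so the normalized solutions are within `2γ`. This is already
sharper than the claim, since `γ = ‖A⁻¹A · A⁻¹E‖ ≤ κ(A)‖A⁻¹‖‖E‖` and `1 - γ ≤ 1`.
-/

open scoped Matrix.Norms.L2Operator

open Matrix NormedSpace

lemma norm_normalize_sub_normalize_le {V : Type*} [NormedAddCommGroup V] [NormedSpace ℝ V]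
    {u v : V} {t : ℝ} (ht : 0 ≤ t) (h : ‖u - v‖ ≤ t * ‖v‖) :
    ‖normalize u - normalize v‖ ≤ 2 * t := by
  rcases eq_or_ne v 0 with rfl | hv
  · obtain rfl : u = 0 := by simpa using h
    simpa [normalize_zero_eq_zero] using ht
  have hv0 : 0 < ‖v‖ := norm_pos_iff.2 hv
  have hsplit : normalize u - normalize v =
      (1 - ‖u‖ / ‖v‖) • normalize u + ‖v‖⁻¹ • (u - v) := by
    rw [show u - v = ‖u‖ • normalize u - ‖v‖ • normalize v by
      rw [norm_smul_normalize, norm_smul_normalize]]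
    match_scalars <;> field_simp
    ring
  have hnormalize : ‖normalize u‖ ≤ 1 := by
    rcases eq_or_ne u 0 with rfl | hu
    · simp [normalize_zero_eq_zero]
    · exact (norm_normalize_eq_one_iff.2 hu).le
  have hscale : |1 - ‖u‖ / ‖v‖| ≤ t := by
    rw [one_sub_div hv0.ne', abs_div, abs_of_pos hv0, div_le_iff₀ hv0]
    exact (abs_norm_sub_norm_le v u).trans (norm_sub_rev v u ▸ h)
  calc ‖normalize u - normalize v‖
      ≤ |1 - ‖u‖ / ‖v‖| * ‖normalize u‖ + ‖v‖⁻¹ * ‖u - v‖ := by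
        rw [hsplit]
        refine (norm_add_le _ _).trans_eq ?_
        rw [norm_smul, norm_smul, Real.norm_eq_abs, norm_inv, norm_norm]
    _ ≤ t * 1 + t := by
        gcongr
        rwa [inv_mul_le_iff₀ hv0, mul_comm]
    _ = 2 * t := by ring

lemma IsUnit.add_of_norm_inverse_mul_lt_one {R : Type*} [NormedRing R] [HasSummableGeomSeries R]
    {a e : R} (ha : IsUnit a) (h : ‖Ring.inverse a * e‖ < 1) : IsUnit (a + e) := by
  have hfactor : a + e = a * (1 - -(Ring.inverse a * e)) := by
    rw [sub_neg_eq_add, mul_add, mul_one, ← mul_assoc, Ring.mul_inverse_cancel a ha, one_mul]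
  exact hfactor ▸ ha.mul (isUnit_one_sub_of_norm_lt_one (by rwa [norm_neg]))

lemma Matrix.inv_mulVec_add_mulVec_sub_self {n R : Type*} [Fintype n] [DecidableEq n]
    [CommRing R] {A : Matrix n n R} (hA : IsUnit A) (E : Matrix n n R) (c : n → R) :
    A⁻¹ *ᵥ ((A + E) *ᵥ c) - c = (A⁻¹ * E) *ᵥ c := by
  rw [mulVec_mulVec, mul_add, nonsing_inv_mul _ (A.isUnit_iff_isUnit_det.1 hA), add_mulVec,
    one_mulVec, add_sub_cancel_left]

theorem normalized_solution_perturbation_general {m : ℕ} (A E : Matrix (Fin m) (Fin m) ℝ)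
    (hA : IsUnit A) (hγ : ‖A⁻¹ * E‖ < 1)
    (y : EuclideanSpace ℝ (Fin m))
    (cstar c : EuclideanSpace ℝ (Fin m))
    (hcstar : ∀ i, cstar i = A⁻¹.mulVec y i)
    (hc : ∀ i, c i = (A + E)⁻¹.mulVec y i) :
    ‖(1 / ‖cstar‖) • cstar - (1 / ‖c‖) • c‖ ≤
      2 * ‖E‖ * ‖A⁻¹‖ ^ 2 * ‖A‖ / (1 - ‖A⁻¹ * E‖) := by
  have hAE : IsUnit (A + E) :=
    hA.add_of_norm_inverse_mul_lt_one (nonsing_inv_eq_ringInverse A ▸ hγ)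
  have hsolve : (A + E) *ᵥ c = y := by
    rw [show c.ofLp = (A + E)⁻¹ *ᵥ y from funext hc, mulVec_mulVec,
      mul_nonsing_inv _ ((A + E).isUnit_iff_isUnit_det.1 hAE), one_mulVec]
  have hdiff : cstar - c = WithLp.toLp 2 ((A⁻¹ * E) *ᵥ c) := by
    ext i
    simp [hcstar, ← inv_mulVec_add_mulVec_sub_self hA E c, hsolve]
  have hclose : ‖cstar - c‖ ≤ ‖A⁻¹ * E‖ * ‖c‖ := hdiff ▸ l2_opNorm_mulVec _ c
  have hγ_le : ‖A⁻¹ * E‖ ≤ ‖E‖ * ‖A⁻¹‖ ^ 2 * ‖A‖ :=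
    calc ‖A⁻¹ * E‖ = ‖A⁻¹ * A * (A⁻¹ * E)‖ := by
          rw [nonsing_inv_mul _ (A.isUnit_iff_isUnit_det.1 hA), one_mul]
      _ ≤ ‖A⁻¹‖ * ‖A‖ * (‖A⁻¹‖ * ‖E‖) := norm_mul₃_le.trans (by gcongr; exact norm_mul_le _ _)
      _ = ‖E‖ * ‖A⁻¹‖ ^ 2 * ‖A‖ := by ring
  simp only [one_div]
  calc ‖normalize cstar - normalize c‖ ≤ 2 * ‖A⁻¹ * E‖ :=
        norm_normalize_sub_normalize_le (norm_nonneg _) hclose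
    _ ≤ 2 * ‖A⁻¹ * E‖ / (1 - ‖A⁻¹ * E‖) :=
        le_div_self (by positivity) (by linarith) (by linarith [norm_nonneg (A⁻¹ * E)])
    _ ≤ 2 * ‖E‖ * ‖A⁻¹‖ ^ 2 * ‖A‖ / (1 - ‖A⁻¹ * E‖) :=
        div_le_div_of_nonneg_right (by linarith) (by linarith)

/-- **Perturbation of the normalized solution of a linear system**: if `A` is
invertible, `γ = ‖A⁻¹E‖ < 1` (ℓ²-operator norm) and `y ≠ 0`, then the normalized
solutions `c* = A⁻¹y` and `c = (A+E)⁻¹y` satisfy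
`‖c*/‖c*‖ − c/‖c‖‖ ≤ 2‖E‖‖A⁻¹‖²‖A‖/(1 − γ)`. -/
theorem normalized_solution_perturbation {m : ℕ} (A E : Matrix (Fin m) (Fin m) ℝ)
    (hA : IsUnit A) (hγ : ‖A⁻¹ * E‖ < 1)
    (y : EuclideanSpace ℝ (Fin m)) (hy : y ≠ 0)
    (cstar c : EuclideanSpace ℝ (Fin m))
    (hcstar : ∀ i, cstar i = A⁻¹.mulVec y i)
    (hc : ∀ i, c i = (A + E)⁻¹.mulVec y i) :
    ‖(1 / ‖cstar‖) • cstar - (1 / ‖c‖) • c‖ ≤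
      2 * ‖E‖ * ‖A⁻¹‖ ^ 2 * ‖A‖ / (1 - ‖A⁻¹ * E‖) :=
  normalized_solution_perturbation_general A E hA hγ y cstar c hcstar hc
end

section
/- Let u, v ∈ ℂ^n be unit vectors and define w ∈ ℂ^(n×n) in coordinates by w(i,j) = (u_i · v_j + v_i · u_j)/2. Then ‖w‖² = 1/2 + |⟪u, v⟫|²/2. -/
open scoped InnerProductSpace

/-! The vector `w` is `(u ⊗ v + v ⊗ u) / 2`. Inner products of elementary tensors factorise,
`⟪u ⊗ v, x ⊗ y⟫ = ⟪u, x⟫ ⟪v, y⟫`, so expanding the square gives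
`‖u ⊗ v + v ⊗ u‖² = 2 ‖u‖² ‖v‖² + 2 |⟪u, v⟫|²`. -/

namespace EuclideanSpace

variable {𝕜 ι κ : Type*} [RCLike 𝕜]

def tprod (u : EuclideanSpace 𝕜 ι) (v : EuclideanSpace 𝕜 κ) : EuclideanSpace 𝕜 (ι × κ) :=
  WithLp.toLp 2 fun p => u p.1 * v p.2

@[simp]
theorem tprod_apply (u : EuclideanSpace 𝕜 ι) (v : EuclideanSpace 𝕜 κ) (p : ι × κ) :
    tprod u v p = u p.1 * v p.2 := rfl

variable [Fintype ι] [Fintype κ]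

theorem inner_tprod_tprod (u x : EuclideanSpace 𝕜 ι) (v y : EuclideanSpace 𝕜 κ) :
    ⟪tprod u v, tprod x y⟫_𝕜 = ⟪u, x⟫_𝕜 * ⟪v, y⟫_𝕜 := by
  simp only [PiLp.inner_apply, RCLike.inner_apply, tprod_apply, Fintype.sum_prod_type,
    Finset.sum_mul_sum, map_mul]
  refine Finset.sum_congr rfl fun i _ => Finset.sum_congr rfl fun j _ => ?_
  ring

theorem norm_tprod (u : EuclideanSpace 𝕜 ι) (v : EuclideanSpace 𝕜 κ) :
    ‖tprod u v‖ = ‖u‖ * ‖v‖ := by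
  have h : ‖tprod u v‖ ^ 2 = (‖u‖ * ‖v‖) ^ 2 := by
    rw [@norm_sq_eq_re_inner 𝕜, inner_tprod_tprod, inner_self_eq_norm_sq_to_K,
      inner_self_eq_norm_sq_to_K]
    norm_cast
    ring
  exact (pow_left_inj₀ (norm_nonneg _) (by positivity) two_ne_zero).mp h

theorem re_inner_tprod_tprod_swap (u v : EuclideanSpace 𝕜 ι) :
    RCLike.re ⟪tprod u v, tprod v u⟫_𝕜 = ‖⟪u, v⟫_𝕜‖ ^ 2 := by
  rw [inner_tprod_tprod, ← inner_conj_symm v u, RCLike.mul_conj]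
  norm_cast

theorem norm_tprod_add_tprod_swap_sq (u v : EuclideanSpace 𝕜 ι) :
    ‖tprod u v + tprod v u‖ ^ 2 = 2 * ‖u‖ ^ 2 * ‖v‖ ^ 2 + 2 * ‖⟪u, v⟫_𝕜‖ ^ 2 := by
  rw [@norm_add_sq 𝕜, norm_tprod, norm_tprod, re_inner_tprod_tprod_swap]
  ring

end EuclideanSpace

/-- **Success probability of the swap test** (Eq. (22)): for unit vectors `u, v ∈ ℂⁿ`,
the vector `w` with coordinates `w(i,j) = (u_i v_j + v_i u_j)/2` (the swap-test state
after projecting the ancilla onto `|+⟩`) satisfies `‖w‖² = 1/2 + |⟪u,v⟫|²/2`. -/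
theorem swap_test_probability {n : ℕ} (u v : EuclideanSpace ℂ (Fin n))
    (hu : ‖u‖ = 1) (hv : ‖v‖ = 1)
    (w : EuclideanSpace ℂ (Fin n × Fin n))
    (hw : ∀ i j : Fin n, w (i, j) = (u i * v j + v i * u j) / 2) :
    ‖w‖ ^ 2 = 1 / 2 + ‖(⟪u, v⟫_ℂ)‖ ^ 2 / 2 := by
  have hw_tprod : w = (2⁻¹ : ℂ) • (EuclideanSpace.tprod u v + EuclideanSpace.tprod v u) := by
    ext ⟨i, j⟩
    simp [hw, div_eq_inv_mul, mul_add]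
  rw [hw_tprod, norm_smul, mul_pow, EuclideanSpace.norm_tprod_add_tprod_swap_sq, hu, hv]
  norm_num
  ring
end
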